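/- For every signature s from the list (−,−,−,−), (−,−,−,0), (−,−,−,+), (−,−,0,0), (−,−,0,+), (−,−,+,+), there exist a 4-dimensional real non-unimodular Lie algebra 𝔤 (i.e., trace(ad(X)) ≠ 0 for some X ∈ 𝔤) and an inner product ⟨·,·⟩ on 𝔤 such that the signature of the Ricci operator of the metric Lie algebra (𝔤, ⟨·,·⟩) equals s. -/

import Mathlib

open Matrix Polynomial

noncomputable section

variable {L : Type*} [LieRing L] [LieAlgebra ℝ L]

/-- `Q` is an inner product on the real Lie algebra `L`: a symmetric positive definite
bilinear form. -/
def IsInnerProduct (Q : L →ₗ[ℝ] L →ₗ[ℝ] ℝ) : Prop :=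
  (∀ x y, Q x y = Q y x) ∧ ∀ x, x ≠ 0 → 0 < Q x x

/-- `g` is a `Q`-orthonormal basis of `L`. -/
def IsOrthonormalBasis {ι : Type*} [DecidableEq ι] (Q : L →ₗ[ℝ] L →ₗ[ℝ] ℝ)
    (g : Module.Basis ι ℝ L) : Prop :=
  ∀ i j, Q (g i) (g j) = if i = j then 1 else 0

/-- The matrix of `ad (g i)` with respect to the basis `g`. -/
def adMatrix {ι : Type*} [Fintype ι] [DecidableEq ι] (g : Module.Basis ι ℝ L) (i : ι) :
    Matrix ι ι ℝ :=
  LinearMap.toMatrix g g (LieAlgebra.ad ℝ L (g i))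

/-- The matrix, in a `Q`-orthonormal basis `g`, of the Ricci operator
`Ric = -(1/2) ∑ᵢ ad_{gᵢ}* ∘ ad_{gᵢ} + (1/4) ∑ᵢ ad_{gᵢ} ∘ ad_{gᵢ}* - (1/2) B - (ad_H)ˢ`
of the metric Lie algebra `(L, Q)`:  in an orthonormal basis the adjoint `A*` corresponds
to the transposed matrix, the Killing operator `B` has matrix
`(j,k) ↦ trace(ad(gⱼ) ∘ ad(g_k))`, and `H = ∑ᵢ trace(ad gᵢ) • gᵢ`, so that the matrix of
`ad_H` is `∑ᵢ trace(ad gᵢ) • (matrix of ad gᵢ)` and `(ad_H)ˢ = (1/2)(ad_H + ad_H*)`. -/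
def ricciMatrix {ι : Type*} [Fintype ι] [DecidableEq ι] (g : Module.Basis ι ℝ L) : Matrix ι ι ℝ :=
  (-(1/2 : ℝ)) • ∑ i, (adMatrix g i)ᵀ * adMatrix g i
    + (1/4 : ℝ) • ∑ i, adMatrix g i * (adMatrix g i)ᵀ
    - (1/2 : ℝ) • Matrix.of (fun j k => (adMatrix g j * adMatrix g k).trace)
    - (1/2 : ℝ) • ((∑ i, (adMatrix g i).trace • adMatrix g i)
        + (∑ i, (adMatrix g i).trace • adMatrix g i)ᵀ)

/-- `μ` lists the eigenvalues (with multiplicity, in nondecreasing order) of the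
4×4 matrix `A`: `μ` is monotone and the characteristic polynomial of `A` is
`∏ᵢ (X - μ i)`. -/
def SortedEigenvalues (A : Matrix (Fin 4) (Fin 4) ℝ) (μ : Fin 4 → ℝ) : Prop :=
  Monotone μ ∧ A.charpoly = ∏ i, (X - C (μ i))

end

/-- `s` is realized as a Ricci signature on the 4-dimensional non-unimodular real Lie
algebra `L`: for some inner product `Q` on `L`, the sorted eigenvalues of the Ricci
operator (computed in a `Q`-orthonormal basis) have signs given by `s`. -/
def RealizesRicciSignatureNonUnimodular (L : Type) [LieRing L] [LieAlgebra ℝ L]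
    (s : Fin 4 → SignType) : Prop :=
  Module.finrank ℝ L = 4 ∧
  (∃ Y : L, LinearMap.trace ℝ L (LieAlgebra.ad ℝ L Y) ≠ 0) ∧
  ∃ Q : L →ₗ[ℝ] L →ₗ[ℝ] ℝ, IsInnerProduct Q ∧
    ∃ g : Module.Basis (Fin 4) ℝ L, IsOrthonormalBasis Q g ∧
      ∃ μ : Fin 4 → ℝ, SortedEigenvalues (ricciMatrix g) μ ∧ ∀ i, SignType.sign (μ i) = s i

set_option maxHeartbeats 1000000

noncomputable section
def Vd (_d : Fin 4 → ℝ) : Type := Fin 4 → ℝ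
namespace Vd
variable {d : Fin 4 → ℝ}
instance : AddCommGroup (Vd d) := inferInstanceAs (AddCommGroup (Fin 4 → ℝ))
instance : Module ℝ (Vd d) := inferInstanceAs (Module ℝ (Fin 4 → ℝ))
def ofFun (x : Fin 4 → ℝ) : Vd d := x
def ap (x : Vd d) : Fin 4 → ℝ := x
@[simp] lemma ap_ofFun (f : Fin 4 → ℝ) (i : Fin 4) : (ofFun f : Vd d).ap i = f i := rfl
@[simp] lemma ap_add (x y : Vd d) (i : Fin 4) : (x + y).ap i = x.ap i + y.ap i := rfl
@[simp] lemma ap_smul (r : ℝ) (x : Vd d) (i : Fin 4) : (r • x).ap i = r * x.ap i := rfl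
@[simp] lemma ap_zero (i : Fin 4) : (0 : Vd d).ap i = 0 := rfl
lemma ext' {x y : Vd d} (h : ∀ i, x.ap i = y.ap i) : x = y := funext h
def brkt (x y : Vd d) : Vd d :=
  ofFun fun i => x.ap 0 * (d i * y.ap i) - y.ap 0 * (d i * x.ap i)
@[simp] lemma ap_brkt (x y : Vd d) (i : Fin 4) :
    (brkt x y).ap i = x.ap 0 * (d i * y.ap i) - y.ap 0 * (d i * x.ap i) := rfl
instance : LieRing (Vd d) where
  bracket := brkt
  add_lie x y z := ext' fun i => by simp only [ap_brkt, ap_add]; ring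
  lie_add x y z := ext' fun i => by simp only [ap_brkt, ap_add]; ring
  lie_self x := ext' fun i => by simp only [ap_brkt, ap_zero]; ring
  leibniz_lie x y z := ext' fun i => by simp only [ap_brkt, ap_add]; ring
@[simp] lemma ap_lie (x y : Vd d) (i : Fin 4) :
    (⁅x, y⁆ : Vd d).ap i = x.ap 0 * (d i * y.ap i) - y.ap 0 * (d i * x.ap i) := rfl
instance : LieAlgebra ℝ (Vd d) where
  lie_smul r x y := ext' fun i => by simp only [ap_lie, ap_smul]; ring
end Vd

def gB (d : Fin 4 → ℝ) : Module.Basis (Fin 4) ℝ (Vd d) := Pi.basisFun ℝ (Fin 4)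

lemma repr_gB {d : Fin 4 → ℝ} (x : Vd d) (k : Fin 4) : (gB d).repr x k = x.ap k := rfl

lemma ap_gB {d : Fin 4 → ℝ} (i k : Fin 4) :
    (gB d i).ap k = if i = k then 1 else 0 := by
  show (Pi.basisFun ℝ (Fin 4) i) k = _
  rw [Pi.basisFun_apply, Pi.single_apply]
  simp [eq_comm]

def Qd (d : Fin 4 → ℝ) : Vd d →ₗ[ℝ] Vd d →ₗ[ℝ] ℝ :=
  LinearMap.mk₂ ℝ (fun x y => ∑ i, x.ap i * y.ap i)
    (fun x x' y => by simp [add_mul, Finset.sum_add_distrib])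
    (fun r x y => by simp [Finset.mul_sum, mul_assoc])
    (fun x y y' => by simp [mul_add, Finset.sum_add_distrib])
    (fun r x y => by simp [Finset.mul_sum, mul_comm, mul_assoc, mul_left_comm])
@[simp] lemma Qd_apply {d : Fin 4 → ℝ} (x y : Vd d) :
    Qd d x y = ∑ i, x.ap i * y.ap i := rfl

lemma adMatrix_apply (d : Fin 4 → ℝ) (i k j : Fin 4) :
    adMatrix (gB d) i k j =
      (if i = 0 then 1 else 0) * (d k * (if j = k then 1 else 0))
        - (if j = 0 then 1 else 0) * (d k * (if i = k then 1 else 0)) := by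
  unfold adMatrix
  rw [LinearMap.toMatrix_apply, LieAlgebra.ad_apply, repr_gB, Vd.ap_lie, ap_gB, ap_gB,
    ap_gB, ap_gB]

lemma trace_ad (d : Fin 4 → ℝ) :
    LinearMap.trace ℝ (Vd d) (LieAlgebra.ad ℝ (Vd d) (gB d 0)) = d 1 + d 2 + d 3 := by
  rw [LinearMap.trace_eq_matrix_trace ℝ (gB d)]
  show Matrix.trace (adMatrix (gB d) 0) = _
  simp [Matrix.trace, Fin.sum_univ_four, adMatrix_apply, Matrix.diag]
  ring

lemma isInnerProduct_Qd (d : Fin 4 → ℝ) : IsInnerProduct (Qd d) := by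
  constructor
  · intro x y; simp [mul_comm]
  · intro x hx
    have h : ∃ i, x.ap i ≠ 0 := by
      by_contra h; push_neg at h
      exact hx (Vd.ext' fun i => by simp [h i])
    obtain ⟨i, hi⟩ := h
    rw [Qd_apply]
    apply Finset.sum_pos' (fun j _ => mul_self_nonneg _)
    exact ⟨i, Finset.mem_univ i, mul_self_pos.mpr hi⟩
end
noncomputable section
open Matrix Polynomial
variable (a b c : ℝ)

lemma adM0 : adMatrix (gB ![0,a,b,c]) 0 = !![0,0,0,0; 0,a,0,0; 0,0,b,0; 0,0,0,c] := by
  ext k j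
  rw [adMatrix_apply]
  fin_cases k <;> fin_cases j <;> simp [vecHead, vecTail]

lemma adM1 : adMatrix (gB ![0,a,b,c]) 1 = !![0,0,0,0; -a,0,0,0; 0,0,0,0; 0,0,0,0] := by
  ext k j
  rw [adMatrix_apply]
  fin_cases k <;> fin_cases j <;> simp [vecHead, vecTail]

lemma adM2 : adMatrix (gB ![0,a,b,c]) 2 = !![0,0,0,0; 0,0,0,0; -b,0,0,0; 0,0,0,0] := by
  ext k j
  rw [adMatrix_apply]
  fin_cases k <;> fin_cases j <;> simp [vecHead, vecTail]

lemma adM3 : adMatrix (gB ![0,a,b,c]) 3 = !![0,0,0,0; 0,0,0,0; 0,0,0,0; -c,0,0,0] := by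
  ext k j
  rw [adMatrix_apply]
  fin_cases k <;> fin_cases j <;> simp [vecHead, vecTail]
end
noncomputable section
open Matrix Polynomial
variable (a b c : ℝ)

def adFam (a b c : ℝ) : Fin 4 → Matrix (Fin 4) (Fin 4) ℝ :=
  ![!![0,0,0,0; 0,a,0,0; 0,0,b,0; 0,0,0,c],
    !![0,0,0,0; -a,0,0,0; 0,0,0,0; 0,0,0,0],
    !![0,0,0,0; 0,0,0,0; -b,0,0,0; 0,0,0,0],
    !![0,0,0,0; 0,0,0,0; 0,0,0,0; -c,0,0,0]]

lemma hA : ∀ i, adMatrix (gB ![0,a,b,c]) i = adFam a b c i := by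
  intro i
  fin_cases i
  · exact adM0 a b c
  · exact adM1 a b c
  · exact adM2 a b c
  · exact adM3 a b c

lemma trace_fin_four' (A : Matrix (Fin 4) (Fin 4) ℝ) :
    A.trace = A 0 0 + A 1 1 + A 2 2 + A 3 3 := by
  simp [Matrix.trace, Fin.sum_univ_four, Matrix.diag]

lemma hS1 : ∑ i, (adFam a b c i)ᵀ * adFam a b c i =
    !![a^2+b^2+c^2,0,0,0; 0,a^2,0,0; 0,0,b^2,0; 0,0,0,c^2] := by
  ext k j
  rw [Matrix.sum_apply]
  fin_cases k <;> fin_cases j <;>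
    simp [adFam, Fin.sum_univ_four, Matrix.mul_apply, vecHead, vecTail] <;> ring

lemma hS2 : ∑ i, adFam a b c i * (adFam a b c i)ᵀ =
    !![0,0,0,0; 0,2*a^2,0,0; 0,0,2*b^2,0; 0,0,0,2*c^2] := by
  ext k j
  rw [Matrix.sum_apply]
  fin_cases k <;> fin_cases j <;>
    simp [adFam, Fin.sum_univ_four, Matrix.mul_apply, vecHead, vecTail] <;> ring

lemma hS3 : Matrix.of (fun j k => (adFam a b c j * adFam a b c k).trace) =
    !![a^2+b^2+c^2,0,0,0; 0,0,0,0; 0,0,0,0; 0,0,0,0] := by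
  ext k j
  fin_cases k <;> fin_cases j <;>
    simp [adFam, Fin.sum_univ_four, Matrix.mul_apply, trace_fin_four',
      vecHead, vecTail] <;> ring

lemma hS4 : ∑ i, (adFam a b c i).trace • adFam a b c i =
    !![0,0,0,0; 0,(a+b+c)*a,0,0; 0,0,(a+b+c)*b,0; 0,0,0,(a+b+c)*c] := by
  ext k j
  rw [Matrix.sum_apply]
  fin_cases k <;> fin_cases j <;>
    simp [adFam, Fin.sum_univ_four, trace_fin_four', vecHead, vecTail] <;> ring

lemma ricci_eq :
    ricciMatrix (gB ![0,a,b,c]) =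
      Matrix.diagonal ![-(a^2 + b^2 + c^2), -((a+b+c)*a), -((a+b+c)*b), -((a+b+c)*c)] := by
  unfold ricciMatrix
  simp only [hA]
  rw [hS1, hS2, hS3, hS4]
  have hdiag : (Matrix.diagonal ![-(a^2+b^2+c^2), -((a+b+c)*a), -((a+b+c)*b), -((a+b+c)*c)]
      : Matrix (Fin 4) (Fin 4) ℝ) =
      !![-(a^2+b^2+c^2),0,0,0; 0,-((a+b+c)*a),0,0; 0,0,-((a+b+c)*b),0; 0,0,0,-((a+b+c)*c)] := by
    ext k j
    fin_cases k <;> fin_cases j <;> rfl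
  rw [hdiag]
  ext k j
  fin_cases k <;> fin_cases j <;> simp [vecHead, vecTail] <;> ring
end

noncomputable section
open Matrix Polynomial

lemma charpoly_diagonal (v : Fin 4 → ℝ) :
    (Matrix.diagonal v).charpoly = ∏ i, (X - C (v i)) := by
  have h : charmatrix (Matrix.diagonal v) = Matrix.diagonal (fun i => X - C (v i)) := by
    ext i j
    by_cases hij : i = j
    · subst hij; simp
    · rw [charmatrix_apply_ne _ _ _ hij, Matrix.diagonal_apply_ne _ hij,
        Matrix.diagonal_apply_ne _ hij]
      simp
  rw [Matrix.charpoly, h, Matrix.det_diagonal]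

lemma mono4 {v : Fin 4 → ℝ} (h0 : v 0 ≤ v 1) (h1 : v 1 ≤ v 2) (h2 : v 2 ≤ v 3) :
    Monotone v := by
  intro i j hij
  fin_cases i <;> fin_cases j <;>
    first
      | exact le_rfl
      | exact h0
      | exact h1
      | exact h2
      | exact h0.trans h1
      | exact (h0.trans h1).trans h2
      | exact h1.trans h2
      | exact absurd hij (by decide)

lemma isOrthonormal_gB' (d : Fin 4 → ℝ) : IsOrthonormalBasis (Qd d) (gB d) := by
  intro i j
  rw [Qd_apply]
  simp [ap_gB, ite_mul, Finset.sum_ite_eq, eq_comm]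


lemma main (a b c : ℝ) (s : Fin 4 → SignType) (ht : a + b + c ≠ 0)
    (hm : Monotone ![-(a^2+b^2+c^2), -((a+b+c)*a), -((a+b+c)*b), -((a+b+c)*c)])
    (hs : ∀ i, SignType.sign
      ((![-(a^2+b^2+c^2), -((a+b+c)*a), -((a+b+c)*b), -((a+b+c)*c)] : Fin 4 → ℝ) i) = s i) :
    RealizesRicciSignatureNonUnimodular (Vd ![0,a,b,c]) s := by
  refine ⟨?_, ⟨gB ![0,a,b,c] 0, ?_⟩, Qd ![0,a,b,c], isInnerProduct_Qd _,
    gB ![0,a,b,c], isOrthonormal_gB' _,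
    ![-(a^2+b^2+c^2), -((a+b+c)*a), -((a+b+c)*b), -((a+b+c)*c)], ⟨hm, ?_⟩, hs⟩
  · exact Module.finrank_fin_fun ℝ
  · rw [trace_ad]
    simpa using ht
  · rw [ricci_eq, charpoly_diagonal]
end

/-- Each of the signatures `(-,-,-,-)`, `(-,-,-,0)`, `(-,-,-,+)`,
`(-,-,0,0)`, `(-,-,0,+)`, `(-,-,+,+)` is realized as the signature of the Ricci operator
of some left-invariant Riemannian metric on some 4-dimensional non-unimodular Lie group. -/
theorem ricci_signatures_nonunimodular_realized :
    ∀ s ∈ ({![-1, -1, -1, -1], ![-1, -1, -1, 0], ![-1, -1, -1, 1], ![-1, -1, 0, 0],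
        ![-1, -1, 0, 1], ![-1, -1, 1, 1]} : Set (Fin 4 → SignType)),
      ∃ (L : Type) (instR : LieRing L) (instA : @LieAlgebra ℝ L _ instR),
        @RealizesRicciSignatureNonUnimodular L instR instA s := by

  have key : ∀ (a b c : ℝ) (s : Fin 4 → SignType), a + b + c ≠ 0 →
      Monotone ![-(a^2+b^2+c^2), -((a+b+c)*a), -((a+b+c)*b), -((a+b+c)*c)] →
      (∀ i, SignType.sign
        ((![-(a^2+b^2+c^2), -((a+b+c)*a), -((a+b+c)*b), -((a+b+c)*c)] : Fin 4 → ℝ) i) = s i) →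
      ∃ (L : Type) (instR : LieRing L) (instA : @LieAlgebra ℝ L _ instR),
        @RealizesRicciSignatureNonUnimodular L instR instA s := by
    intro a b c s ht hm hs
    exact ⟨Vd ![0,a,b,c], inferInstance, inferInstance, main a b c s ht hm hs⟩
  rintro s (rfl | rfl | rfl | rfl | rfl | rfl)
  · exact key 1 1 1 _ (by norm_num) (mono4 (by norm_num) (by norm_num [Matrix.cons_val_two])
        (by norm_num [Matrix.cons_val_two, Matrix.cons_val_three]))
      (by intro i; fin_cases i <;> norm_num [sign_apply, vecHead, vecTail])
  · exact key 1 1 0 _ (by norm_num) (mono4 (by norm_num) (by norm_num [Matrix.cons_val_two])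
        (by norm_num [Matrix.cons_val_two, Matrix.cons_val_three]))
      (by intro i; fin_cases i <;> norm_num [sign_apply, vecHead, vecTail])
  · exact key 1 1 (-1) _ (by norm_num) (mono4 (by norm_num) (by norm_num [Matrix.cons_val_two])
        (by norm_num [Matrix.cons_val_two, Matrix.cons_val_three]))
      (by intro i; fin_cases i <;> norm_num [sign_apply, vecHead, vecTail])
  · exact key 1 0 0 _ (by norm_num) (mono4 (by norm_num) (by norm_num [Matrix.cons_val_two])
        (by norm_num [Matrix.cons_val_two, Matrix.cons_val_three]))
      (by intro i; fin_cases i <;> norm_num [sign_apply, vecHead, vecTail])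
  · exact key 2 0 (-1) _ (by norm_num) (mono4 (by norm_num) (by norm_num [Matrix.cons_val_two])
        (by norm_num [Matrix.cons_val_two, Matrix.cons_val_three]))
      (by intro i; fin_cases i <;> norm_num [sign_apply, vecHead, vecTail])
  · exact key 3 (-1) (-1) _ (by norm_num) (mono4 (by norm_num) (by norm_num [Matrix.cons_val_two])
        (by norm_num [Matrix.cons_val_two, Matrix.cons_val_three]))
      (by intro i; fin_cases i <;> norm_num [sign_apply, vecHead, vecTail])
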